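/- arXiv:2103.11075 — 4 statements merged into one kernel-verified Lean document; each statement's English description precedes it below -/
import Mathlib

section
/- Let N ≥ 3 and 0 < V < C. Suppose each agent i ∈ {1,…,N} uses a single unconditional mixed strategy s(i) ∈ [0,1] (a probability of playing Hawk) against every opponent, and suppose that for every pair of distinct agents i, j the profile (s(i), s(j)) is a Nash equilibrium of the Hawk-Dove game. Then s(i) = V/C for every agent i. (With fully restricted memory, the anarchical structure where everyone plays the mixed equilibrium strategy is the unique equilibrium.) -/
/-!
Against an opponent who plays Hawk with probability `q`, the payoff of `p` is affine in `p`
with slope `(V - q C) / 2`, so the unique best response is pure Hawk if `q < V / C` and pure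
Dove if `q > V / C`. If some agent deviates from `V / C`, two other agents must both best
respond to it with the same pure strategy; since `0 < V / C < 1`, a pure strategy lies on the
far side of `V / C`, so each of them must answer the other with the opposite pure strategy.
-/


/-- Expected payoff in the Hawk-Dove game of a mixed strategy `p` (probability of
playing Hawk) against a mixed strategy `q`. -/
noncomputable def hdU (V C p q : ℝ) : ℝ :=
  p * q * ((V - C) / 2) + p * (1 - q) * V + (1 - p) * (1 - q) * (V / 2)

/-- A mixed strategy profile `(p, q)` is a Nash equilibrium of the Hawk-Dove game. -/
def hdNash (V C p q : ℝ) : Prop :=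
  (∀ p' ∈ Set.Icc (0 : ℝ) 1, hdU V C p' q ≤ hdU V C p q) ∧
  (∀ q' ∈ Set.Icc (0 : ℝ) 1, hdU V C q' p ≤ hdU V C q p)

theorem Fintype.exists_ne_ne_of_three_le_card {α : Type*} [Fintype α]
    (h : 3 ≤ Fintype.card α) (a : α) : ∃ b c : α, b ≠ a ∧ c ≠ a ∧ b ≠ c := by
  classical
  have hcard : 1 < (Finset.univ.erase a).card := by
    rw [Finset.card_erase_of_mem (Finset.mem_univ a), Finset.card_univ]
    omega
  obtain ⟨b, hb, c, hc, hbc⟩ := Finset.one_lt_card.mp hcard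
  exact ⟨b, c, Finset.ne_of_mem_erase hb, Finset.ne_of_mem_erase hc, hbc⟩

section

variable {V C p q : ℝ}

theorem hdU_sub_hdU (V C p p' q : ℝ) :
    hdU V C p' q - hdU V C p q = (p' - p) * ((V - q * C) / 2) := by
  unfold hdU
  ring

theorem eq_one_of_hdU_one_le (hp : p ≤ 1) (hq : q * C < V)
    (h : hdU V C 1 q ≤ hdU V C p q) : p = 1 := by
  have := hdU_sub_hdU V C p 1 q
  nlinarith

theorem eq_zero_of_hdU_zero_le (hp : 0 ≤ p) (hq : V < q * C)
    (h : hdU V C 0 q ≤ hdU V C p q) : p = 0 := by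
  have := hdU_sub_hdU V C p 0 q
  nlinarith

theorem hdNash.eq_one_of_mul_lt (h : hdNash V C p q) (hp : p ≤ 1) (hq : q * C < V) :
    p = 1 :=
  eq_one_of_hdU_one_le hp hq (h.1 1 ⟨zero_le_one, le_rfl⟩)

theorem hdNash.eq_zero_of_lt_mul (h : hdNash V C p q) (hp : 0 ≤ p) (hq : V < q * C) :
    p = 0 :=
  eq_zero_of_hdU_zero_le hp hq (h.1 0 ⟨le_rfl, zero_le_one⟩)

end

theorem hawkDove_anarchical_unique (N : ℕ) (hN : 3 ≤ N) (V C : ℝ)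
    (hV : 0 < V) (hVC : V < C) (s : Fin N → ℝ)
    (hs : ∀ i, s i ∈ Set.Icc (0 : ℝ) 1)
    (hnash : ∀ i j : Fin N, i ≠ j → hdNash V C (s i) (s j)) :
    ∀ i, s i = V / C := by
  have hC : 0 < C := hV.trans hVC
  intro i
  obtain ⟨j, k, hji, hki, hjk⟩ :=
    Fintype.exists_ne_ne_of_three_le_card (by rwa [Fintype.card_fin]) i
  rcases lt_trichotomy (s i * C) V with hlt | heq | hgt
  · have hj : s j = 1 := (hnash j i hji).eq_one_of_mul_lt (hs j).2 hlt
    have hk : s k = 1 := (hnash k i hki).eq_one_of_mul_lt (hs k).2 hlt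
    have : s j = 0 := (hnash j k hjk).eq_zero_of_lt_mul (hs j).1 (by rw [hk]; linarith)
    linarith
  · exact eq_div_of_mul_eq hC.ne' heq
  · have hj : s j = 0 := (hnash j i hji).eq_zero_of_lt_mul (hs j).1 hgt
    have hk : s k = 0 := (hnash k i hki).eq_zero_of_lt_mul (hs k).1 hgt
    have : s j = 1 := (hnash j k hjk).eq_one_of_mul_lt (hs j).2 (by rw [hk]; linarith)
    linarith
end

section
/- (Proposition 1, existence part.) For every natural number N ≥ 1 there exists a memory assignment f mapping each agent i ∈ {1,…,N} to a set f(i) of other agents, such that |f(i)| ≤ ⌈N/2⌉ − 1 for every i, and for every i the set of opponents not in f(i) is one-sided: either every j ∉ f(i) with j ≠ i satisfies j > i, or every such j satisfies j < i. (Hence the linear hierarchy, where each agent plays Hawk against all lower-ranked and Dove against all higher-ranked opponents, can be implemented with memory size ⌈N/2 − 1⌉: each agent plays one action conditioned on each memorized opponent and a single uniform action against all non-memorized opponents.) -/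
/-!
Agent `i ≤ ⌈N/2⌉` memorizes the `i - 1` agents `j < i` and plays Hawk against everyone else;
agent `i > ⌈N/2⌉` memorizes the `N - i < ⌈N/2⌉` agents `j > i` and plays Dove against everyone else.
-/

open Finset

def halfMemory (N i : ℕ) : Finset ℕ :=
  if i ≤ (N + 1) / 2 then Ico 1 i else Ioc i N

lemma halfMemory_subset_erase (N i : ℕ) : halfMemory N i ⊆ (Icc 1 N).erase i := by
  intro j hj
  unfold halfMemory at hj
  split_ifs at hj <;> simp only [mem_Ico, mem_Ioc] at hj <;>
    simp only [mem_erase, mem_Icc] <;> omega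

lemma card_halfMemory_le (N i : ℕ) : (halfMemory N i).card ≤ (N + 1) / 2 - 1 := by
  unfold halfMemory
  split_ifs <;> simp only [Nat.card_Ico, Nat.card_Ioc] <;> omega

lemma halfMemory_one_sided (N i : ℕ) :
    (∀ j ∈ Icc 1 N, j ≠ i → j ∉ halfMemory N i → i < j) ∨
      (∀ j ∈ Icc 1 N, j ≠ i → j ∉ halfMemory N i → j < i) := by
  unfold halfMemory
  split_ifs
  · left
    intro j hj hji hm
    simp only [mem_Icc, mem_Ico] at hj hm
    omega
  · right
    intro j hj hji hm
    simp only [mem_Icc, mem_Ioc] at hj hm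
    omega

theorem linear_hierarchy_implementable_general (N : ℕ) :
    ∃ f : ℕ → Finset ℕ,
      ∀ i ∈ Finset.Icc 1 N,
        f i ⊆ (Finset.Icc 1 N).erase i ∧
        (f i).card ≤ (N + 1) / 2 - 1 ∧
        ((∀ j ∈ Finset.Icc 1 N, j ≠ i → j ∉ f i → i < j) ∨
         (∀ j ∈ Finset.Icc 1 N, j ≠ i → j ∉ f i → j < i)) :=
  ⟨halfMemory N, fun i _ =>
    ⟨halfMemory_subset_erase N i, card_halfMemory_le N i, halfMemory_one_sided N i⟩⟩

theorem linear_hierarchy_implementable (N : ℕ) (hN : 1 ≤ N) :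
    ∃ f : ℕ → Finset ℕ,
      ∀ i ∈ Finset.Icc 1 N,
        f i ⊆ (Finset.Icc 1 N).erase i ∧
        (f i).card ≤ (N + 1) / 2 - 1 ∧
        ((∀ j ∈ Finset.Icc 1 N, j ≠ i → j ∉ f i → i < j) ∨
         (∀ j ∈ Finset.Icc 1 N, j ≠ i → j ∉ f i → j < i)) :=
  linear_hierarchy_implementable_general N
end

section
/- For all natural numbers m ≤ N, the total memory required for the three-layer dominance hierarchy equals m(N−m) + ⌈m(m−2)/4⌉; that is, m(N−m) + Σ_{i=1}^{m} min(i−1, m−i) = m(N−m) + ⌈m(m−2)/4⌉, where for m ≤ 1 the term ⌈m(m−2)/4⌉ is interpreted as 0. -/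
/-!
Reindexing by `j = i - 1`, the triangular sum is `S m = ∑_{j < m} min j (m - 1 - j)`. Dropping the
two outer terms (both `0`) of `S (m + 2)` and shifting leaves the terms of `S m`, each raised by
one, so `S (m + 2) = S m + m`. The ceiling `⌈m (m - 2) / 4⌉ = (m (m - 2) + 3) / 4` grows by the same
`m` when `m` is replaced by `m + 2`, and both agree at `m = 0, 1`.
-/

open Finset

lemma sum_Icc_min_sub_eq_sum_range (m : ℕ) :
    ∑ i ∈ Icc 1 m, min (i - 1) (m - i) = ∑ j ∈ range m, min j (m - 1 - j) := by
  rw [range_eq_Ico, ← Ico_add_one_right_eq_Icc, sum_Ico_eq_sum_range, sum_Ico_eq_sum_range]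
  refine sum_congr (by simp) fun j _ => ?_
  omega

lemma sum_range_min_add_two (m : ℕ) :
    ∑ j ∈ range (m + 2), min j (m + 1 - j) = ∑ j ∈ range m, min j (m - 1 - j) + m := by
  have shift : ∀ j ∈ range m, min (j + 1) (m + 1 - (j + 1)) = min j (m - 1 - j) + 1 := by
    intro j hj
    have := mem_range.mp hj
    omega
  rw [sum_range_succ, sum_range_succ', sum_congr rfl shift, sum_add_distrib]
  simp

lemma ceil_quarter_add_two (m : ℕ) :
    ((m + 2) * (m + 2 - 2) + 3) / 4 = (m * (m - 2) + 3) / 4 + m := by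
  rcases m with _ | _ | m
  · rfl
  · rfl
  · have expand : (m + 2 + 2) * (m + 2 + 2 - 2) + 3 = (m + 2) * (m + 2 - 2) + 3 + (m + 2) * 4 := by
      simp only [Nat.add_sub_cancel]
      ring
    rw [expand, Nat.add_mul_div_right _ _ (by norm_num)]

lemma sum_range_min_eq_ceil_quarter : ∀ m : ℕ,
    ∑ j ∈ range m, min j (m - 1 - j) = (m * (m - 2) + 3) / 4
  | 0 => rfl
  | 1 => rfl
  | m + 2 => by
    rw [show m + 2 - 1 = m + 1 from rfl, sum_range_min_add_two, sum_range_min_eq_ceil_quarter m,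
      ceil_quarter_add_two]

theorem three_layer_total_memory_general (m N : ℕ) :
    m * (N - m) + ∑ i ∈ Finset.Icc 1 m, min (i - 1) (m - i) =
      m * (N - m) + (m * (m - 2) + 3) / 4 := by
  rw [sum_Icc_min_sub_eq_sum_range, sum_range_min_eq_ceil_quarter]

theorem three_layer_total_memory (m N : ℕ) (h : m ≤ N) :
    m * (N - m) + ∑ i ∈ Finset.Icc 1 m, min (i - 1) (m - i) =
      m * (N - m) + (m * (m - 2) + 3) / 4 :=
  three_layer_total_memory_general m N
end

section
/- For every N ≥ 5, there is no memory assignment f with |f(i)| ≤ 1 for all agents i ∈ {1,…,N} such that for every agent the set of non-memorized opponents is one-sided with respect to the linear rank; that is, the linear hierarchy cannot be supported as an equilibrium when the common memory size is 1 and the population has at least five agents. -/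
open Finset

/-- Whichever side the non-memorized opponents lie on, the two nearest opponents on the other side
must both be memorized. -/
theorem one_lt_card_of_oneSided {N i : ℕ} {m : Finset ℕ} (hi : 3 ≤ i) (hiN : i + 2 ≤ N)
    (hside : (∀ j ∈ Icc 1 N, j ≠ i → j ∉ m → i < j) ∨
      (∀ j ∈ Icc 1 N, j ≠ i → j ∉ m → j < i)) :
    1 < m.card := by
  rw [one_lt_card]
  rcases hside with hup | hdown
  · have hmem : ∀ j ∈ Icc 1 N, j < i → j ∈ m := fun j hj hji =>
      by_contra fun hjm => lt_asymm hji (hup j hj hji.ne hjm)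
    exact ⟨i - 1, hmem _ (by simp; omega) (by omega), i - 2, hmem _ (by simp; omega) (by omega),
      by omega⟩
  · have hmem : ∀ j ∈ Icc 1 N, i < j → j ∈ m := fun j hj hij =>
      by_contra fun hjm => lt_asymm hij (hdown j hj hij.ne' hjm)
    exact ⟨i + 1, hmem _ (by simp; omega) (by omega), i + 2, hmem _ (by simp; omega) (by omega),
      by omega⟩

theorem linear_hierarchy_impossible_with_singular_memory (N : ℕ) (hN : 5 ≤ N) :
    ¬ ∃ f : ℕ → Finset ℕ,
        ∀ i ∈ Finset.Icc 1 N,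
          f i ⊆ (Finset.Icc 1 N).erase i ∧
          (f i).card ≤ 1 ∧
          ((∀ j ∈ Finset.Icc 1 N, j ≠ i → j ∉ f i → i < j) ∨
           (∀ j ∈ Finset.Icc 1 N, j ≠ i → j ∉ f i → j < i)) := by
  rintro ⟨f, hf⟩
  obtain ⟨-, hcard, hside⟩ := hf 3 (by simp; omega)
  have := one_lt_card_of_oneSided le_rfl (by omega) hside
  omega
end
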